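/- Let Φ ∈ ℚ[[x,s]] be the unique formal power series with Φ = exp(x + sΦ); let Ψ₁ := −(1/2)·log(1 − sΦ); let Y := sΦ·(1 − sΦ)^{−1} and let Ψ₂ := Φ^{−1}·( (5/24)·Y³ + (1/8)·Y² ). Suppose Ψ₃ ∈ ℚ[[x,s]] satisfies ∂Ψ₃/∂s = (1/2)·( ∂²Ψ₂/∂x² + 2Φ·∂Ψ₃/∂x + 2·(∂Ψ₁/∂x)·(∂Ψ₂/∂x) ) with initial condition Ψ₃|_{s=0} = 0. Then Ψ₃ = Φ^{−2}·( (5/16)·Y⁶ + (25/48)·Y⁵ + (11/48)·Y⁴ + (1/48)·Y³ ). -/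

import Mathlib

/-- Formal partial derivative `∂f/∂x_i` of a multivariate formal power series. -/
noncomputable def pd {σ : Type*} (R : Type*) [CommSemiring R]
    (i : σ) (f : MvPowerSeries σ R) : MvPowerSeries σ R :=
  fun m => (((m i) + 1 : ℕ) : R) * MvPowerSeries.coeff (R := R) (m + Finsupp.single i 1) f

/-- Total degree of a monomial. -/
def mdeg {σ : Type*} (m : σ →₀ ℕ) : ℕ := m.sum fun _ e => e

/-- `exp f = Σ_{k≥0} f^k/k!` for `f` with zero constant coefficient, computed
coefficientwise: since `f^k` has order `≥ k`, only `k ≤ deg m` contribute to the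
coefficient at a monomial `m`. -/
noncomputable def expS {σ R : Type*} [CommRing R] [Algebra ℚ R]
    (f : MvPowerSeries σ R) : MvPowerSeries σ R :=
  fun m => MvPowerSeries.coeff (R := R) m
    (∑ k ∈ Finset.range (mdeg m + 1), ((k.factorial : ℚ)⁻¹) • f ^ k)

/-- `log(1 − u) = −Σ_{k≥1} u^k/k` for `u` with zero constant coefficient, computed
coefficientwise: since `u^k` has order `≥ k`, only `k ≤ deg m` contribute. -/
noncomputable def logOneSubS {σ R : Type*} [CommRing R] [Algebra ℚ R]
    (u : MvPowerSeries σ R) : MvPowerSeries σ R :=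
  fun m => MvPowerSeries.coeff (R := R) m
    (- ∑ k ∈ Finset.Icc 1 (mdeg m), ((k : ℚ)⁻¹) • u ^ k)

/-- The genus-one counting series `Ψ₁ = −½·log(1 − sΦ)`. -/
noncomputable def psiOneComb (Φ : MvPowerSeries (Fin 2) ℚ) : MvPowerSeries (Fin 2) ℚ :=
  -((2 : ℚ)⁻¹) • logOneSubS (MvPowerSeries.X 1 * Φ)

/-- `Y := sΦ·(1 − sΦ)⁻¹`. -/
noncomputable def yComb (Φ : MvPowerSeries (Fin 2) ℚ) : MvPowerSeries (Fin 2) ℚ :=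
  MvPowerSeries.X 1 * Φ * (1 - MvPowerSeries.X 1 * Φ)⁻¹

/-- The genus-two counting series `Ψ₂ = Φ⁻¹·((5/24)Y³ + (1/8)Y²)`. -/
noncomputable def psiTwoComb (Φ : MvPowerSeries (Fin 2) ℚ) : MvPowerSeries (Fin 2) ℚ :=
  Φ⁻¹ * (MvPowerSeries.C (σ := Fin 2) (R := ℚ) (5 / 24) * (yComb Φ) ^ 3 +
    MvPowerSeries.C (σ := Fin 2) (R := ℚ) (1 / 8) * (yComb Φ) ^ 2)

/-! Write `Y = yComb Φ`. Differentiating `Φ = exp(x + sΦ)` gives `∂ₓΦ = Φ(1 + Y)` and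
`∂ₛΦ = Φ²(1 + Y)`, hence `∂ₓY = Y(1 + Y)²`, `∂ₛY = Φ(1 + Y)³`, `∂ₓΦ⁻¹ = -Φ⁻¹(1 + Y)`,
`∂ₛΦ⁻¹ = -(1 + Y)` and `∂ₓΨ₁ = Y(1 + Y)/2`. With these rules both sides of the equation,
evaluated at the candidate `Φ⁻²·P₃(Y)`, become `Φ⁻¹` times a polynomial in `Y`, and they agree.
The difference `E` of two solutions satisfies `∂ₛE = Φ·∂ₓE` and vanishes at `s = 0`; comparing
coefficients of increasing `s`-degree forces `E = 0`. -/

open MvPowerSeries Finsupp Finset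

theorem pd_eq_pderiv {σ R : Type*} [CommSemiring R] (i : σ) : pd R i = pderiv R i := by
  ext f m
  rw [coeff_pderiv, mul_comm]
  change ((m i + 1 : ℕ) : R) * _ = _
  push_cast
  rfl

section Truncation

variable {σ R : Type*} [CommSemiring R]

theorem coeff_mul_pow_of_degree_lt {u : MvPowerSeries σ R} (hu : constantCoeff u = 0)
    (v : MvPowerSeries σ R) {k : ℕ} {m : σ →₀ ℕ} (h : degree m < k) : coeff m (v * u ^ k) = 0 :=
  coeff_of_lt_order <| (Nat.cast_lt.mpr h).trans_le <|
    (le_order_pow_of_constantCoeff_eq_zero k hu).trans (le_add_self.trans le_order_mul)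

theorem coeff_pow_of_degree_lt {u : MvPowerSeries σ R} (hu : constantCoeff u = 0) {k : ℕ}
    {m : σ →₀ ℕ} (h : degree m < k) : coeff m (u ^ k) = 0 := by
  simpa using coeff_mul_pow_of_degree_lt hu 1 h

theorem coeff_mul_congr_of_degree_lt {g G G' : MvPowerSeries σ R} {K : ℕ}
    (hG : ∀ m, degree m < K → coeff m G = coeff m G') {m : σ →₀ ℕ} (hm : degree m < K) :
    coeff m (g * G) = coeff m (g * G') := by
  classical
  rw [coeff_mul, coeff_mul]
  refine sum_congr rfl fun p hp => ?_
  rw [hG p.2 ((le_add_self.trans_eq (by rw [← map_add, mem_antidiagonal.mp hp])).trans_lt hm)]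

/-- Differentiation through truncations: the coefficient of `∂F/∂xᵢ` in degree `d` only involves
coefficients of `F` in degree `d + 1`. -/
theorem pderiv_eq_mul_of_truncations (i : σ) {F G g : MvPowerSeries σ R}
    (P Q : ℕ → MvPowerSeries σ R)
    (hP : ∀ K m, degree m < K → coeff m F = coeff m (P K))
    (hQ : ∀ K m, degree m < K → coeff m G = coeff m (Q K))
    (hPQ : ∀ K, pderiv R i (P (K + 1)) = g * Q K) :
    pderiv R i F = g * G := by
  ext m
  have hdeg : degree (m + single i 1) < degree m + 2 := by simp
  rw [coeff_pderiv, hP _ _ hdeg, ← coeff_pderiv, hPQ,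
    coeff_mul_congr_of_degree_lt (hQ (degree m + 1)) (Nat.lt_succ_self _)]

end Truncation

section Exp

variable {σ R : Type*} [CommRing R] [Algebra ℚ R]

theorem coeff_expS_of_degree_lt {f : MvPowerSeries σ R} (hf : constantCoeff f = 0) {K : ℕ}
    {m : σ →₀ ℕ} (h : degree m < K) :
    coeff m (expS f) = coeff m (∑ k ∈ range K, (k.factorial : ℚ)⁻¹ • f ^ k) := by
  change coeff m (∑ k ∈ range (degree m + 1), _) = _
  rw [map_sum, map_sum]
  refine sum_subset (range_subset_range.mpr h) fun k _ hk => ?_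
  rw [map_rat_smul, coeff_pow_of_degree_lt hf (by simpa using hk), smul_zero]

theorem pderiv_expS {f : MvPowerSeries σ R} (hf : constantCoeff f = 0) (i : σ) :
    pderiv R i (expS f) = pderiv R i f * expS f := by
  refine pderiv_eq_mul_of_truncations i (fun K => ∑ k ∈ range K, (k.factorial : ℚ)⁻¹ • f ^ k) _
    (fun _ _ => coeff_expS_of_degree_lt hf) (fun _ _ => coeff_expS_of_degree_lt hf) fun K => ?_
  rw [sum_range_succ', map_add, pow_zero, map_rat_smul, Derivation.map_one_eq_zero, smul_zero,
    add_zero, map_sum, Finset.mul_sum]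
  refine sum_congr rfl fun k _ => ?_
  have hk : ((k + 1).factorial : ℚ)⁻¹ * (k + 1 : ℕ) = (k.factorial : ℚ)⁻¹ := by
    rw [Nat.factorial_succ, Nat.cast_mul, mul_inv, mul_comm, ← mul_assoc,
      mul_inv_cancel₀ (by positivity), one_mul]
  rw [map_rat_smul, Derivation.leibniz_pow, add_tsub_cancel_right, ← Nat.cast_smul_eq_nsmul ℚ,
    smul_smul, hk, smul_eq_mul, mul_comm, mul_smul_comm]

end Exp

section Log

variable {σ : Type*}

theorem coeff_inv_one_sub_of_degree_lt {u : MvPowerSeries σ ℚ} (hu : constantCoeff u = 0)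
    {K : ℕ} {m : σ →₀ ℕ} (h : degree m < K) :
    coeff m (1 - u)⁻¹ = coeff m (∑ j ∈ range K, u ^ j) := by
  have hinv : (1 - u)⁻¹ * (1 - u) = 1 := MvPowerSeries.inv_mul_cancel _ (by simp [hu])
  have hgeom : (1 - u)⁻¹ = ∑ j ∈ range K, u ^ j + (1 - u)⁻¹ * u ^ K := by
    linear_combination (∑ j ∈ range K, u ^ j) * hinv - (1 - u)⁻¹ * geom_sum_mul_neg u K
  rw [hgeom, map_add, coeff_mul_pow_of_degree_lt hu _ h, add_zero]

theorem coeff_logOneSubS_of_degree_lt {u : MvPowerSeries σ ℚ} (hu : constantCoeff u = 0)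
    {K : ℕ} {m : σ →₀ ℕ} (h : degree m < K) :
    coeff m (logOneSubS u) = coeff m (-∑ j ∈ Icc 1 K, (j : ℚ)⁻¹ • u ^ j) := by
  change coeff m (-∑ j ∈ Icc 1 (degree m), _) = _
  rw [map_neg, map_neg, map_sum, map_sum]
  congr 1
  refine sum_subset (Icc_subset_Icc_right h.le) fun j hj hj' => ?_
  rw [map_rat_smul, coeff_pow_of_degree_lt hu, smul_zero]
  simp only [mem_Icc] at hj hj'
  omega

theorem pderiv_logOneSubS {u : MvPowerSeries σ ℚ} (hu : constantCoeff u = 0) (i : σ) :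
    pderiv ℚ i (logOneSubS u) = -pderiv ℚ i u * (1 - u)⁻¹ := by
  refine pderiv_eq_mul_of_truncations i (fun K => -∑ j ∈ Icc 1 K, (j : ℚ)⁻¹ • u ^ j)
    (fun K => ∑ j ∈ range (K + 1), u ^ j) (fun _ _ => coeff_logOneSubS_of_degree_lt hu)
    (fun _ _ h => coeff_inv_one_sub_of_degree_lt hu (h.trans (Nat.lt_succ_self _))) fun K => ?_
  rw [map_neg, map_sum, neg_mul, Finset.mul_sum, ← Finset.Ico_add_one_right_eq_Icc,
    sum_Ico_eq_sum_range, Nat.add_sub_cancel]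
  congr 1
  refine sum_congr rfl fun j _ => ?_
  rw [add_comm 1 j, map_rat_smul, Derivation.leibniz_pow, add_tsub_cancel_right,
    ← Nat.cast_smul_eq_nsmul ℚ, smul_smul, inv_mul_cancel₀ (by positivity), one_smul,
    smul_eq_mul, mul_comm]

end Log

/-- The equation determines the coefficients of `xᵢ`-degree `n + 1` from those of degree `≤ n`. -/
theorem eq_zero_of_pderiv_eq_mul_pderiv {σ R : Type*} [CommSemiring R] [IsAddTorsionFree R]
    {i j : σ} (hij : i ≠ j) {A E : MvPowerSeries σ R} (hE : pderiv R i E = A * pderiv R j E)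
    (h0 : ∀ m : σ →₀ ℕ, m i = 0 → coeff m E = 0) : E = 0 := by
  classical
  suffices ∀ n (m : σ →₀ ℕ), m i = n → coeff m E = 0 by ext m; exact this _ m rfl
  intro n
  induction n using Nat.strong_induction_on with
  | _ n ih =>
    intro m hm
    rcases n with _ | n
    · exact h0 m hm
    have hle : single i 1 ≤ m := single_le_iff.mpr (by omega)
    set m' := m - single i 1
    have hm' : m' i = n := by simp [m', hm]
    have hcoeff := congr(coeff m' $hE)
    rw [coeff_pderiv, tsub_add_cancel_of_le hle, coeff_mul, hm'] at hcoeff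
    have hrhs : ∀ p ∈ antidiagonal m', coeff p.1 A * coeff p.2 (pderiv R j E) = 0 := by
      intro p hp
      have hp2 : p.2 i ≤ n := hm' ▸ (le_add_self.trans_eq (mem_antidiagonal.mp hp)) i
      rw [coeff_pderiv, ih _ (Nat.lt_succ_of_le hp2) _ (by simp [hij]), zero_mul, mul_zero]
    rw [sum_eq_zero hrhs, mul_comm, ← Nat.cast_succ, ← nsmul_eq_mul, smul_eq_zero] at hcoeff
    exact hcoeff.resolve_left (by simp)

theorem coeff_X_mul_of_eq_zero {σ R : Type*} [CommSemiring R] {s : σ} {m : σ →₀ ℕ}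
    (hm : m s = 0) (f : MvPowerSeries σ R) : coeff m (X s * f) = 0 := by
  classical
  rw [X_def, coeff_monomial_mul, if_neg]
  simpa [single_le_iff] using hm.le

theorem C_eq_natCast_mul_C {σ : Type*} {q r : ℚ} (n : ℕ) (h : q = n * r) :
    C (σ := σ) q = (n : MvPowerSeries σ ℚ) * C r := by
  rw [h, map_mul, map_natCast]

-- Variable `0` is `x` and variable `1` is `s`.
section Genus

variable {Φ : MvPowerSeries (Fin 2) ℚ}

theorem constantCoeff_one_sub_X_mul_ne_zero : constantCoeff (1 - X 1 * Φ) ≠ 0 := by simp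

theorem inv_one_sub_X_mul : (1 - X 1 * Φ)⁻¹ = 1 + yComb Φ := by
  have h := MvPowerSeries.mul_inv_cancel _ (constantCoeff_one_sub_X_mul_ne_zero (Φ := Φ))
  unfold yComb
  linear_combination h

theorem X_mul_mul_one_add_yComb : X 1 * Φ * (1 + yComb Φ) = yComb Φ := by
  rw [← inv_one_sub_X_mul]; rfl

theorem pderiv_yComb (i : Fin 2) :
    pderiv ℚ i (yComb Φ) = pderiv ℚ i (X 1 * Φ) * (1 + yComb Φ) ^ 2 := by
  conv_lhs => rw [yComb]
  rw [Derivation.leibniz, pderiv_inv', inv_one_sub_X_mul, map_sub, pderiv_one, smul_eq_mul,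
    smul_eq_mul]
  linear_combination pderiv ℚ i (X 1 * Φ) * (1 + yComb Φ) * X_mul_mul_one_add_yComb (Φ := Φ)

noncomputable def psiThreeComb (Φ : MvPowerSeries (Fin 2) ℚ) : MvPowerSeries (Fin 2) ℚ :=
  (Φ⁻¹) ^ 2 * (C (5 / 16) * yComb Φ ^ 6 + C (25 / 48) * yComb Φ ^ 5 +
    C (11 / 48) * yComb Φ ^ 4 + C (1 / 48) * yComb Φ ^ 3)

theorem coeff_psiThreeComb_of_eq_zero {m : Fin 2 →₀ ℕ} (hm : m 1 = 0) :
    coeff m (psiThreeComb Φ) = 0 := by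
  have h : psiThreeComb Φ = X 1 * (Φ * (1 - X 1 * Φ)⁻¹ * (Φ⁻¹) ^ 2 *
      (C (5 / 16) * yComb Φ ^ 5 + C (25 / 48) * yComb Φ ^ 4 + C (11 / 48) * yComb Φ ^ 3 +
        C (1 / 48) * yComb Φ ^ 2)) := by
    rw [psiThreeComb, yComb]
    ring
  rw [h, coeff_X_mul_of_eq_zero hm]

variable (hΦ : Φ = expS (X 0 + X 1 * Φ))
include hΦ

theorem constantCoeff_of_eq_expS : constantCoeff Φ = 1 := by
  rw [hΦ, ← coeff_zero_eq_constantCoeff_apply,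
    coeff_expS_of_degree_lt (K := 1) (by simp) (by simp)]
  simp

theorem mul_inv_of_eq_expS : Φ * Φ⁻¹ = 1 :=
  MvPowerSeries.mul_inv_cancel _ (by simp [constantCoeff_of_eq_expS hΦ])

theorem pderiv_of_eq_expS (i : Fin 2) :
    pderiv ℚ i Φ = (pderiv ℚ i (X 0) + pderiv ℚ i (X 1) * Φ) * Φ * (1 + yComb Φ) := by
  have h := congr(pderiv ℚ i $hΦ)
  rw [pderiv_expS (by simp), ← hΦ, map_add, Derivation.leibniz, smul_eq_mul, smul_eq_mul] at h
  have hinv := MvPowerSeries.mul_inv_cancel _ (constantCoeff_one_sub_X_mul_ne_zero (Φ := Φ))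
  rw [← inv_one_sub_X_mul]
  linear_combination (1 - X 1 * Φ)⁻¹ * h - pderiv ℚ i Φ * hinv

theorem pderiv_x_of_eq_expS : pderiv ℚ 0 Φ = Φ * (1 + yComb Φ) := by
  rw [pderiv_of_eq_expS hΦ, pderiv_X_self, pderiv_X_of_ne (by decide)]
  ring

theorem pderiv_s_of_eq_expS : pderiv ℚ 1 Φ = Φ ^ 2 * (1 + yComb Φ) := by
  rw [pderiv_of_eq_expS hΦ, pderiv_X_self, pderiv_X_of_ne (by decide)]
  ring

theorem pderiv_x_yComb : pderiv ℚ 0 (yComb Φ) = yComb Φ * (1 + yComb Φ) ^ 2 := by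
  rw [pderiv_yComb, Derivation.leibniz, pderiv_x_of_eq_expS hΦ, pderiv_X_of_ne (by decide),
    smul_eq_mul, smul_zero, add_zero]
  linear_combination (1 + yComb Φ) ^ 2 * X_mul_mul_one_add_yComb (Φ := Φ)

theorem pderiv_s_yComb : pderiv ℚ 1 (yComb Φ) = Φ * (1 + yComb Φ) ^ 3 := by
  rw [pderiv_yComb, Derivation.leibniz, pderiv_s_of_eq_expS hΦ, pderiv_X_self, smul_eq_mul,
    smul_eq_mul]
  linear_combination Φ * (1 + yComb Φ) ^ 2 * X_mul_mul_one_add_yComb (Φ := Φ)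

theorem pderiv_x_inv : pderiv ℚ 0 Φ⁻¹ = -(Φ⁻¹ * (1 + yComb Φ)) := by
  rw [pderiv_inv', pderiv_x_of_eq_expS hΦ]
  linear_combination (-(Φ⁻¹ * (1 + yComb Φ))) * mul_inv_of_eq_expS hΦ

theorem pderiv_s_inv : pderiv ℚ 1 Φ⁻¹ = -(1 + yComb Φ) := by
  rw [pderiv_inv', pderiv_s_of_eq_expS hΦ]
  linear_combination (-(1 + Φ * Φ⁻¹) * (1 + yComb Φ)) * mul_inv_of_eq_expS hΦ

theorem pderiv_x_psiOneComb :
    pderiv ℚ 0 (psiOneComb Φ) = (2 : ℚ)⁻¹ • (yComb Φ * (1 + yComb Φ)) := by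
  rw [psiOneComb, map_rat_smul, pderiv_logOneSubS (by simp), inv_one_sub_X_mul,
    Derivation.leibniz, pderiv_x_of_eq_expS hΦ, pderiv_X_of_ne (by decide), smul_eq_mul,
    smul_zero, add_zero, neg_smul, ← smul_neg]
  congr 1
  linear_combination (1 + yComb Φ) * X_mul_mul_one_add_yComb (Φ := Φ)

theorem pderiv_s_psiThreeComb :
    pderiv ℚ 1 (psiThreeComb Φ) = (2 : ℚ)⁻¹ •
      (pderiv ℚ 0 (pderiv ℚ 0 (psiTwoComb Φ)) + 2 * Φ * pderiv ℚ 0 (psiThreeComb Φ) +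
        2 * pderiv ℚ 0 (psiOneComb Φ) * pderiv ℚ 0 (psiTwoComb Φ)) := by
  simp only [psiThreeComb, psiTwoComb, pderiv_x_psiOneComb hΦ, map_add, map_neg, map_zero,
    map_nsmul, Derivation.leibniz, Derivation.leibniz_pow, Derivation.map_one_eq_zero, pderiv_C,
    pderiv_x_inv hΦ, pderiv_s_inv hΦ, pderiv_x_yComb hΦ, pderiv_s_yComb hΦ, smul_eq_mul]
  simp only [nsmul_eq_mul, smul_eq_C_mul, Nat.cast_ofNat]
  -- every constant is an integer multiple of `c = 1/48`; what remains is a polynomial identity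
  -- in `c, Φ, Φ⁻¹, Y` modulo `48 c = 1` and `Φ Φ⁻¹ = 1`
  rw [C_eq_natCast_mul_C (q := 5 / 24) (r := 1 / 48) 10 (by norm_num),
    C_eq_natCast_mul_C (q := 1 / 8) (r := 1 / 48) 6 (by norm_num),
    C_eq_natCast_mul_C (q := 5 / 16) (r := 1 / 48) 15 (by norm_num),
    C_eq_natCast_mul_C (q := 25 / 48) (r := 1 / 48) 25 (by norm_num),
    C_eq_natCast_mul_C (q := 11 / 48) (r := 1 / 48) 11 (by norm_num),
    C_eq_natCast_mul_C (q := 2⁻¹) (r := 1 / 48) 24 (by norm_num)]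
  have hc : C (σ := Fin 2) (1 / 48 : ℚ) * 48 = 1 := by
    rw [← map_ofNat C, ← map_mul]; norm_num
  have hΦΦ := mul_inv_of_eq_expS hΦ
  generalize C (σ := Fin 2) (1 / 48 : ℚ) = c at *
  push_cast
  grind

end Genus

/-- Let `Φ = exp(x + sΦ)`, `Ψ₁ = −½log(1 − sΦ)`,
`Ψ₂ = Φ⁻¹((5/24)Y³ + (1/8)Y²)`.  If `Ψ₃` satisfies
`∂Ψ₃/∂s = ½(∂²Ψ₂/∂x² + 2Φ·∂Ψ₃/∂x + 2·(∂Ψ₁/∂x)(∂Ψ₂/∂x))` with `Ψ₃|_{s=0} = 0`, then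
`Ψ₃ = Φ⁻²·((5/16)Y⁶ + (25/48)Y⁵ + (11/48)Y⁴ + (1/48)Y³)`. -/
theorem stmt16 (Φ Ψ₃ : MvPowerSeries (Fin 2) ℚ)
    (hΦ : Φ = expS (MvPowerSeries.X 0 + MvPowerSeries.X 1 * Φ))
    (heq : pd ℚ 1 Ψ₃ = (2 : ℚ)⁻¹ •
      (pd ℚ 0 (pd ℚ 0 (psiTwoComb Φ)) + 2 * Φ * pd ℚ 0 Ψ₃ +
        2 * pd ℚ 0 (psiOneComb Φ) * pd ℚ 0 (psiTwoComb Φ)))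
    (hinit : ∀ n : ℕ, MvPowerSeries.coeff (R := ℚ) (Finsupp.single 0 n) Ψ₃ = 0) :
    Ψ₃ = (Φ⁻¹) ^ 2 * (MvPowerSeries.C (σ := Fin 2) (R := ℚ) (5 / 16) * (yComb Φ) ^ 6 +
      MvPowerSeries.C (σ := Fin 2) (R := ℚ) (25 / 48) * (yComb Φ) ^ 5 +
      MvPowerSeries.C (σ := Fin 2) (R := ℚ) (11 / 48) * (yComb Φ) ^ 4 +
      MvPowerSeries.C (σ := Fin 2) (R := ℚ) (1 / 48) * (yComb Φ) ^ 3) := by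
  rw [pd_eq_pderiv, pd_eq_pderiv] at heq
  have hdiff : pderiv ℚ 1 (Ψ₃ - psiThreeComb Φ) = Φ * pderiv ℚ 0 (Ψ₃ - psiThreeComb Φ) := by
    rw [map_sub, map_sub, heq, pderiv_s_psiThreeComb hΦ, ← smul_sub, add_sub_add_right_eq_sub,
      add_sub_add_left_eq_sub, ← mul_sub, mul_assoc, two_mul, ← two_smul ℚ,
      inv_smul_smul₀ two_ne_zero]
  have hinit' : ∀ m : Fin 2 →₀ ℕ, m 1 = 0 → coeff m (Ψ₃ - psiThreeComb Φ) = 0 := by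
    intro m hm
    have hm0 : m = single 0 (m 0) := by
      ext j; fin_cases j <;> simp [hm]
    rw [map_sub, coeff_psiThreeComb_of_eq_zero hm, hm0, hinit, sub_zero]
  exact sub_eq_zero.mp (eq_zero_of_pderiv_eq_mul_pderiv (by decide) hdiff hinit')
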